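/- arXiv:2011.08259 — 6 statements merged into one kernel-verified Lean document; each statement's English description precedes it below -/
import Mathlib

section
/- Let R be a commutative ring such that Spec R is connected. Then a formal Laurent series f = Σ aᵢ hⁱ ∈ R((h)) is a unit if and only if there exists an index i₀ such that a_{i₀} is a unit in R and aⱼ is nilpotent for all j < i₀. -/
/-!
Modulo a prime `p`, a unit `f` of `R((h))` becomes a unit of the Laurent series over the domain
`R ⧸ p`, so it has an order `ord_p f`. If `f * g = 1`, then `ord_p f = i` exactly when
`aᵢ b₋ᵢ ∉ p`; hence the fibres of `p ↦ ord_p f` are basic open sets, and this function is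
constant, say `= i₀`, on the connected space `Spec R`. Then `a_{i₀}` lies in no prime and each
`aⱼ` with `j < i₀` lies in every prime. Conversely, the terms below `i₀` are the finitely many
with index in `[ord f, i₀)`, so subtracting them changes `f` by a nilpotent and leaves a series
whose leading coefficient is a unit.
-/

open HahnSeries

theorem isUnit_of_forall_notMem_prime {R : Type*} [CommRing R] {a : R}
    (ha : ∀ p : PrimeSpectrum R, a ∉ p.asIdeal) : IsUnit a := by
  by_contra h
  obtain ⟨M, hM, haM⟩ := exists_max_ideal_of_mem_nonunits h
  exact ha ⟨M, hM.isPrime⟩ haM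

namespace HahnSeries

theorem isNilpotent_single {Γ R : Type*} [AddCommMonoid Γ] [PartialOrder Γ]
    [IsOrderedCancelAddMonoid Γ] [Semiring R] (a : Γ) {r : R} (hr : IsNilpotent r) :
    IsNilpotent (single a r) := by
  obtain ⟨n, hn⟩ := hr
  exact ⟨n, by rw [single_pow, hn, single_eq_zero]⟩

theorem order_eq_iff_coeff_mul_coeff_neg_ne_zero {Γ R : Type*} [AddCommGroup Γ]
    [LinearOrder Γ] [IsOrderedAddMonoid Γ] [Semiring R] [NoZeroDivisors R] [Nontrivial R]
    {x y : R⟦Γ⟧} (hxy : x * y = 1) (g : Γ) :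
    x.order = g ↔ x.coeff g * y.coeff (-g) ≠ 0 := by
  have hx : x ≠ 0 := left_ne_zero_of_mul_eq_one hxy
  have hy : y ≠ 0 := right_ne_zero_of_mul_eq_one hxy
  have hyx : y.order = -x.order := by
    rw [eq_neg_iff_add_eq_zero, add_comm, ← order_mul hx hy, hxy, order_one]
  constructor
  · rintro rfl
    rw [← hyx]
    exact mul_ne_zero (coeff_order_eq_zero.not.mpr hx) (coeff_order_eq_zero.not.mpr hy)
  · intro h
    have hxg := order_le_of_coeff_ne_zero (left_ne_zero_of_mul h)
    have hyg := order_le_of_coeff_ne_zero (right_ne_zero_of_mul h)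
    rw [hyx, neg_le_neg_iff] at hyg
    exact le_antisymm hxg hyg

end HahnSeries

namespace LaurentSeries

variable {R : Type*} [CommRing R]

theorem isUnit_of_isUnit_coeff_of_forall_lt_coeff_eq_zero {f : LaurentSeries R} {i : ℤ}
    (hu : IsUnit (f.coeff i)) (h0 : ∀ j < i, f.coeff j = 0) : IsUnit f := by
  nontriviality R
  have hf : f ≠ 0 := ne_zero_of_coeff_ne_zero hu.ne_zero
  have horder : f.order = i := by
    refine le_antisymm (order_le_of_coeff_ne_zero hu.ne_zero) (not_lt.mp fun h => ?_)
    exact coeff_order_eq_zero.not.mpr hf (h0 _ h)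
  refine isUnit_of_isUnit_leadingCoeff_AddUnitOrder ?_ (AddGroup.isAddUnit _)
  rwa [leadingCoeff_eq, horder]

theorem isUnit_of_isUnit_coeff_of_forall_lt_isNilpotent_coeff {f : LaurentSeries R} {i : ℤ}
    (hu : IsUnit (f.coeff i)) (hnil : ∀ j < i, IsNilpotent (f.coeff j)) : IsUnit f := by
  set n : LaurentSeries R := ∑ j ∈ Finset.Ico f.order i, single j (f.coeff j)
  have hn : IsNilpotent n :=
    isNilpotent_sum fun j hj => isNilpotent_single j (hnil j (Finset.mem_Ico.mp hj).2)
  have hn_coeff (k : ℤ) : n.coeff k = if k ∈ Finset.Ico f.order i then f.coeff k else 0 := by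
    simp only [n, coeff_sum, coeff_single]
    convert Finset.sum_ite_eq (Finset.Ico f.order i) k f.coeff
  have hfn : IsUnit (f - n) := by
    refine isUnit_of_isUnit_coeff_of_forall_lt_coeff_eq_zero (i := i) ?_ fun j hj => ?_
    · simpa [hn_coeff] using hu
    · rcases lt_or_ge j f.order with hjf | hjf
      · simp [hn_coeff, coeff_eq_zero_of_lt_order hjf]
      · simp [hn_coeff, hjf, hj]
  simpa using hn.isUnit_add_left_of_commute hfn (Commute.all _ _)

/-- The order of `f` modulo `p`; it is the junk value `0` when `f ≡ 0 mod p`. -/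
noncomputable def orderAt (f : LaurentSeries R) (p : PrimeSpectrum R) : ℤ :=
  (f.map (Ideal.Quotient.mk p.asIdeal)).order

theorem orderAt_eq_iff {f g : LaurentSeries R} (hfg : f * g = 1) (p : PrimeSpectrum R) (i : ℤ) :
    f.orderAt p = i ↔ f.coeff i * g.coeff (-i) ∉ p.asIdeal := by
  have hπ : f.map (Ideal.Quotient.mk p.asIdeal) * g.map (Ideal.Quotient.mk p.asIdeal) = 1 :=
    calc _ = (f * g).map (Ideal.Quotient.mk p.asIdeal : R →ₙ+* R ⧸ p.asIdeal) :=
          (HahnSeries.map_mul _).symm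
      _ = 1 := by
        rw [hfg]
        exact HahnSeries.map_one (Ideal.Quotient.mk p.asIdeal).toMonoidWithZeroHom
  rw [orderAt, order_eq_iff_coeff_mul_coeff_neg_ne_zero hπ, map_coeff, map_coeff, ← map_mul,
    Ne, Ideal.Quotient.eq_zero_iff_mem]

theorem isLocallyConstant_orderAt {f : LaurentSeries R} (hf : IsUnit f) :
    IsLocallyConstant f.orderAt := by
  obtain ⟨g, hfg⟩ := hf.exists_right_inv
  refine IsLocallyConstant.iff_isOpen_fiber.mpr fun i => ?_
  convert (PrimeSpectrum.basicOpen (f.coeff i * g.coeff (-i))).isOpen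
  ext p
  exact orderAt_eq_iff hfg p i

theorem coeff_mem_of_lt_orderAt (f : LaurentSeries R) (p : PrimeSpectrum R) {j : ℤ}
    (hj : j < f.orderAt p) : f.coeff j ∈ p.asIdeal :=
  Ideal.Quotient.eq_zero_iff_mem.mp (coeff_eq_zero_of_lt_order hj)

end LaurentSeries

/-- Let `R` be a commutative ring such that `Spec R` is connected.
A formal Laurent series `f = Σ aᵢ hⁱ ∈ R((h))` is a unit if and only if there exists an
index `i₀` such that `a_{i₀}` is a unit in `R` and `aⱼ` is nilpotent for all `j < i₀`. -/
theorem laurent_isUnit_iff (R : Type*) [CommRing R]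
    (hconn : ConnectedSpace (PrimeSpectrum R)) (f : LaurentSeries R) :
    IsUnit f ↔ ∃ i₀ : ℤ, IsUnit (f.coeff i₀) ∧ ∀ j : ℤ, j < i₀ → IsNilpotent (f.coeff j) := by
  refine ⟨fun hf => ?_, fun ⟨i₀, hu, hnil⟩ =>
    LaurentSeries.isUnit_of_isUnit_coeff_of_forall_lt_isNilpotent_coeff hu hnil⟩
  obtain ⟨g, hfg⟩ := hf.exists_right_inv
  obtain ⟨p₀⟩ := hconn.toNonempty
  have horder (p : PrimeSpectrum R) : f.orderAt p = f.orderAt p₀ :=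
    (LaurentSeries.isLocallyConstant_orderAt hf).apply_eq_of_preconnectedSpace p p₀
  refine ⟨f.orderAt p₀, isUnit_of_forall_notMem_prime fun p hp => ?_, fun j hj => ?_⟩
  · exact (LaurentSeries.orderAt_eq_iff hfg p _).mp (horder p) (p.asIdeal.mul_mem_right _ hp)
  · exact nilpotent_iff_mem_prime.mpr fun J hJ =>
      f.coeff_mem_of_lt_orderAt ⟨J, hJ⟩ (hj.trans_eq (horder ⟨J, hJ⟩).symm)
end

section
/- Let R be a commutative ring with no nontrivial idempotents. If A(h) · B(h) = 1 in R((h)) with A(h) = a_{-N} h^{-N} + (higher order terms), B(h) = b_{-M} h^{-M} + (higher order terms), a_{-N} ≠ 0, b_{-M} ≠ 0, and N + M > 0, then a_{-N} is nilpotent. -/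
/-!
Over a domain the order of Laurent series is additive, so modulo any prime `p` the series `A`
has order `> -N` exactly when `B` has order `< N`. Hence the zero locus of `a = A.coeff (-N)` is
the union of the basic opens `D(B.coeff j)`, `j < N`: it is clopen in `Spec R`, so it is empty or
everything. Empty would make `a` a unit, which is impossible because `a * B.coeff (-M)` is the
coefficient of `A * B = 1` at `-(N + M) ≠ 0`. So `a` lies in every prime, i.e. it is nilpotent.
-/

open PrimeSpectrum

namespace HahnSeries

variable {Γ R : Type*}

theorem coeff_mul_add_of_forall_lt [AddCommMonoid Γ] [LinearOrder Γ] [IsOrderedCancelAddMonoid Γ]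
    [NonUnitalNonAssocSemiring R] {x y : R⟦Γ⟧} {m n : Γ} (hx : ∀ i < m, x.coeff i = 0)
    (hy : ∀ j < n, y.coeff j = 0) : (x * y).coeff (m + n) = x.coeff m * y.coeff n := by
  rw [coeff_mul]
  refine Finset.sum_eq_single (m, n) (fun ij hij hne => ?_) (fun hmn => ?_)
  · obtain ⟨hi, hj, hsum⟩ := Finset.mem_antidiagonal.1 hij
    have him : m ≤ ij.1 := not_lt.1 fun h => hi (hx _ h)
    have hjn : n ≤ ij.2 := not_lt.1 fun h => hj (hy _ h)
    obtain ⟨rfl, rfl⟩ := (add_eq_add_iff_eq_and_eq him hjn).1 hsum.symm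
    exact absurd rfl hne
  · simp only [Finset.mem_antidiagonal, mem_support, ne_eq, and_true, not_and_or,
      not_not] at hmn
    rcases hmn with h | h <;> simp [h]

variable [AddCommGroup Γ] [LinearOrder Γ] [IsOrderedAddMonoid Γ]

theorem coeff_eq_zero_iff_exists_coeff_ne_zero_of_mul_eq_one [Semiring R] [NoZeroDivisors R]
    [Nontrivial R] {x y : R⟦Γ⟧} (hxy : x * y = 1) {g : Γ} (hx : ∀ i < g, x.coeff i = 0) :
    x.coeff g = 0 ↔ ∃ j < -g, y.coeff j ≠ 0 := by
  have hx0 : x ≠ 0 := left_ne_zero_of_mul_eq_one hxy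
  have hy0 : y ≠ 0 := right_ne_zero_of_mul_eq_one hxy
  have hord : y.order = -x.order := by
    rw [eq_neg_iff_add_eq_zero, add_comm, ← order_mul hx0 hy0, hxy, order_one]
  calc x.coeff g = 0 ↔ g < x.order :=
        ⟨fun h => ((le_order_iff_forall hx0).2 hx).lt_of_ne fun he =>
          hx0 (coeff_order_eq_zero.1 (he ▸ h)), coeff_eq_zero_of_lt_order⟩
    _ ↔ y.order < -g := by rw [hord, neg_lt_neg_iff]
    _ ↔ ∃ j < -g, y.coeff j ≠ 0 := order_lt_iff_exists hy0

theorem coeff_mem_iff_exists_coeff_notMem_of_mul_eq_one [CommRing R] (p : Ideal R) [p.IsPrime]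
    {x y : R⟦Γ⟧} (hxy : x * y = 1) {g : Γ} (hx : ∀ i < g, x.coeff i = 0) :
    x.coeff g ∈ p ↔ ∃ j < -g, y.coeff j ∉ p := by
  let f : R →ₙ+* R ⧸ p := Ideal.Quotient.mk p
  have hf (r : R) : f r = 0 ↔ r ∈ p := Ideal.Quotient.eq_zero_iff_mem
  have hmap : x.map f * y.map f = 1 := by
    rw [← HahnSeries.map_mul, hxy]
    exact HahnSeries.map_one (Ideal.Quotient.mk p).toMonoidWithZeroHom
  simpa [hf] using
    coeff_eq_zero_iff_exists_coeff_ne_zero_of_mul_eq_one hmap fun i hi => by simp [hx i hi]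

theorem isOpen_zeroLocus_coeff_of_mul_eq_one [CommRing R] {x y : R⟦Γ⟧} (hxy : x * y = 1) {g : Γ}
    (hx : ∀ i < g, x.coeff i = 0) : IsOpen (zeroLocus {x.coeff g}) := by
  have : zeroLocus {x.coeff g} = ⋃ j < -g, (basicOpen (y.coeff j) : Set (PrimeSpectrum R)) := by
    ext p
    simp [coeff_mem_iff_exists_coeff_notMem_of_mul_eq_one p.asIdeal hxy hx]
  rw [this]
  exact isOpen_biUnion fun j _ => isOpen_basicOpen

end HahnSeries

namespace PrimeSpectrum

theorem isNilpotent_or_isUnit_of_isOpen_zeroLocus {R : Type*} [CommRing R]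
    (hid : ∀ e : R, IsIdempotentElem e → e = 0 ∨ e = 1) {a : R}
    (ha : IsOpen (zeroLocus {a})) : IsNilpotent a ∨ IsUnit a := by
  obtain ⟨e, he, hae⟩ := isClopen_iff_zeroLocus.1 ⟨isClosed_zeroLocus {a}, ha⟩
  rcases hid e he with rfl | rfl
  · rw [zeroLocus_singleton_zero, zeroLocus_eq_univ_iff, Set.singleton_subset_iff] at hae
    exact .inl hae
  · rw [zeroLocus_singleton_one, ← zeroLocus_span, zeroLocus_empty_iff_eq_top,
      Ideal.span_singleton_eq_top] at hae
    exact .inr hae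

end PrimeSpectrum

theorem leading_coeff_nilpotent_general (R : Type*) [CommRing R]
    (hid : ∀ e : R, IsIdempotentElem e → e = 0 ∨ e = 1)
    (A B : LaurentSeries R) (N M : ℤ)
    (hA : ∀ i : ℤ, i < -N → A.coeff i = 0)
    (hB : ∀ i : ℤ, i < -M → B.coeff i = 0) (hbM : B.coeff (-M) ≠ 0)
    (hAB : A * B = 1) (hNM : 0 < N + M) :
    IsNilpotent (A.coeff (-N)) := by
  have hab : A.coeff (-N) * B.coeff (-M) = 0 := by
    have := HahnSeries.coeff_mul_add_of_forall_lt hA hB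
    rwa [hAB, HahnSeries.coeff_one, if_neg (by omega), eq_comm] at this
  exact (isNilpotent_or_isUnit_of_isOpen_zeroLocus hid
    (HahnSeries.isOpen_zeroLocus_coeff_of_mul_eq_one hAB hA)).resolve_right
    fun hunit => hbM (hunit.mul_right_eq_zero.1 hab)

/-- Let `R` be a commutative ring with no nontrivial idempotents.
If `A(h) · B(h) = 1` in `R((h))` with `A(h) = a₋N h^{-N} + (higher order terms)`,
`B(h) = b₋M h^{-M} + (higher order terms)`, `a₋N ≠ 0`, `b₋M ≠ 0` and `N + M > 0`,
then `a₋N` is nilpotent. -/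
theorem leading_coeff_nilpotent (R : Type*) [CommRing R]
    (hid : ∀ e : R, IsIdempotentElem e → e = 0 ∨ e = 1)
    (A B : LaurentSeries R) (N M : ℤ)
    (hA : ∀ i : ℤ, i < -N → A.coeff i = 0) (haN : A.coeff (-N) ≠ 0)
    (hB : ∀ i : ℤ, i < -M → B.coeff i = 0) (hbM : B.coeff (-M) ≠ 0)
    (hAB : A * B = 1) (hNM : 0 < N + M) :
    IsNilpotent (A.coeff (-N)) :=
  leading_coeff_nilpotent_general R hid A B N M hA hB hbM hAB hNM
end

section
/- Let k be an algebraically closed field of characteristic p > 2, A₀ = k[x₁,y₁,…,x_n,y_n]/(xᵢ^p, yᵢ^p) with the standard Poisson bracket, and m its maximal ideal. Let g = m² viewed as a Lie algebra under the Poisson bracket. Then the derived subalgebra [g, g] equals the direct sum of the homogeneous components of degrees 2 through 2n(p−1) − 1; in particular [g, g] has codimension 1 in g. -/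
/-!
Derivatives of elements of `m²` lie in `m`, so every bracket of two elements of `m²` lies in `m²`.
The bracket is moreover a divergence, `∑ᵢ ∂_{yᵢ}(f ∂_{xᵢ}g) − ∂_{xᵢ}(f ∂_{yᵢ}g)`, and the
coefficient of a derivative `∂_s h` at a monomial with exponent `p − 1` in `s` is a multiple
of `p`; hence no bracket reaches the top monomial `∏ (xᵢyᵢ)^{p−1}`.

Conversely, each monomial `x^d` of degree at least 2 other than the top one lies in the span
of brackets. The brackets `{xᵢyᵢ, x^d} = (d_{xᵢ} − d_{yᵢ}) x^d` and
`{xᵢ², x^d yᵢ/xᵢ} = −2(d_{yᵢ} + 1) x^d` give this with a unit coefficient unless every block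
`xᵢ^{aᵢ} yᵢ^{bᵢ}` of `x^d` is empty or full, `(xᵢyᵢ)^{p−1}`. In that case `x^d` misses some
block `j`, and `{xⱼyᵢ, ·}` exchanges a factor `xᵢyᵢ` of `x^d` for `xⱼyⱼ` modulo brackets,
producing a monomial of the previous kind.
-/

open MvPolynomial

/-- The Poisson bracket `{f,g} = Σᵢ (∂f/∂yᵢ · ∂g/∂xᵢ − ∂f/∂xᵢ · ∂g/∂yᵢ)` on
`k[x₁,y₁,…,xₙ,yₙ]`, where `xᵢ = X (i,0)` and `yᵢ = X (i,1)`. -/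
noncomputable def poissonBracket {k : Type*} [CommRing k] {n : ℕ}
    (f g : MvPolynomial (Fin n × Fin 2) k) : MvPolynomial (Fin n × Fin 2) k :=
  ∑ i : Fin n,
    (pderiv (i, 1) f * pderiv (i, 0) g - pderiv (i, 0) f * pderiv (i, 1) g)

/-- The ideal `(x₁ᵖ, y₁ᵖ, …, xₙᵖ, yₙᵖ)`, so that `A₀` is the quotient by it. -/
noncomputable def truncationIdeal (k : Type*) [CommRing k] (p n : ℕ) :
    Ideal (MvPolynomial (Fin n × Fin 2) k) :=
  Ideal.span (Set.range fun s : Fin n × Fin 2 => (X s : MvPolynomial (Fin n × Fin 2) k) ^ p)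

namespace MvPolynomial

variable {σ R : Type*}

section CommSemiring

variable [CommSemiring R]

theorem X_mul_pderiv_monomial_add_single (a b : σ) (c : σ →₀ ℕ) (r : R) :
    X a * pderiv b (monomial (c + Finsupp.single b 1) r) =
      monomial (c + Finsupp.single a 1) (r * (c b + 1)) := by
  classical
  rw [pderiv_monomial, add_tsub_cancel_right, X, monomial_mul, one_mul, add_comm]
  simp

theorem X_mul_X_mem_idealOfVars_sq (a b : σ) : X a * X b ∈ idealOfVars σ R ^ 2 :=
  pow_two (idealOfVars σ R) ▸
    Ideal.mul_mem_mul (Ideal.subset_span ⟨a, rfl⟩) (Ideal.subset_span ⟨b, rfl⟩)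

theorem pderiv_mem_idealOfVars_of_mem_sq {f : MvPolynomial σ R} (hf : f ∈ idealOfVars σ R ^ 2)
    (i : σ) : pderiv i f ∈ idealOfVars σ R := by
  rw [mem_pow_idealOfVars_iff'] at hf
  rw [← pow_one (idealOfVars σ R), mem_pow_idealOfVars_iff']
  intro m hm
  rw [coeff_pderiv, hf _ (by simp only [map_add, Finsupp.degree_single]; omega), zero_mul]

theorem coeff_pderiv_eq_zero_of_charP (p : ℕ) [CharP R p] {i : σ} {m : σ →₀ ℕ}
    (hm : m i + 1 = p) (f : MvPolynomial σ R) : coeff m (pderiv i f) = 0 := by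
  rw [coeff_pderiv, ← Nat.cast_add_one, hm, CharP.cast_eq_zero, mul_zero]

end CommSemiring

theorem pderiv_pderiv_comm [CommRing R] (i j : σ) (f : MvPolynomial σ R) :
    pderiv i (pderiv j f) = pderiv j (pderiv i f) := by
  have hcomm : ⁅pderiv i, pderiv j⁆ = (0 : Derivation R (MvPolynomial σ R) (MvPolynomial σ R)) :=
    derivation_ext fun s => by
      classical
      rw [Derivation.commutator_apply]
      simp [Pi.single_apply, apply_ite]
  have := congr($hcomm f)
  rwa [Derivation.commutator_apply, Derivation.zero_apply, sub_eq_zero] at this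

theorem monomial_mem_submodule_iff [Field R] {S : Submodule R (MvPolynomial σ R)}
    (d : σ →₀ ℕ) {c : R} (hc : c ≠ 0) : monomial d c ∈ S ↔ monomial d 1 ∈ S := by
  rw [← S.smul_mem_iff hc (x := monomial d 1), smul_monomial, smul_eq_mul, mul_one]

end MvPolynomial

namespace Finsupp

variable {σ : Type*} [Fintype σ] {d : σ →₀ ℕ} {m : ℕ}

theorem degree_lt_card_mul (hle : ∀ s, d s ≤ m) (hne : ∃ s, d s ≠ m) :
    degree d < Fintype.card σ * m := by
  obtain ⟨s, hs⟩ := hne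
  rw [degree_eq_sum, ← smul_eq_mul, ← Finset.card_univ, ← Finset.sum_const]
  exact Finset.sum_lt_sum (fun s _ => hle s) ⟨s, Finset.mem_univ s, lt_of_le_of_ne (hle s) hs⟩

theorem exists_ne_of_degree_lt_card_mul (h : degree d < Fintype.card σ * m) : ∃ s, d s ≠ m := by
  by_contra! hd
  simp [degree_eq_sum, hd] at h

end Finsupp

theorem CharP.natCast_ne_zero_of_pos_of_lt {R : Type*} [AddMonoidWithOne R] (p : ℕ) [CharP R p]
    {m : ℕ} (h0 : 0 < m) (hm : m < p) : (m : R) ≠ 0 :=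
  (CharP.cast_eq_zero_iff R p m).not.2 (Nat.not_dvd_of_pos_of_lt h0 hm)

section PoissonBracket

variable {k : Type*} [CommRing k] {n : ℕ}

theorem poissonBracket_X_zero_left (i : Fin n) (g : MvPolynomial (Fin n × Fin 2) k) :
    poissonBracket (X (i, 0)) g = -pderiv (i, 1) g := by
  classical
  simp [poissonBracket, Pi.single_apply, Prod.ext_iff, ite_mul]

theorem poissonBracket_X_one_left (i : Fin n) (g : MvPolynomial (Fin n × Fin 2) k) :
    poissonBracket (X (i, 1)) g = pderiv (i, 0) g := by
  classical
  simp [poissonBracket, Pi.single_apply, Prod.ext_iff, ite_mul]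

theorem poissonBracket_mul_left (f₁ f₂ g : MvPolynomial (Fin n × Fin 2) k) :
    poissonBracket (f₁ * f₂) g = f₁ * poissonBracket f₂ g + f₂ * poissonBracket f₁ g := by
  simp only [poissonBracket, pderiv_mul, Finset.mul_sum, ← Finset.sum_add_distrib]
  exact Finset.sum_congr rfl fun _ _ => by ring

theorem poissonBracket_mem_idealOfVars_sq {f g : MvPolynomial (Fin n × Fin 2) k}
    (hf : f ∈ idealOfVars _ k ^ 2) (hg : g ∈ idealOfVars _ k ^ 2) :
    poissonBracket f g ∈ idealOfVars _ k ^ 2 := by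
  have hmul : ∀ s t, pderiv s f * pderiv t g ∈ idealOfVars (Fin n × Fin 2) k ^ 2 := fun s t =>
    pow_two (idealOfVars _ k) ▸ Ideal.mul_mem_mul (pderiv_mem_idealOfVars_of_mem_sq hf s)
      (pderiv_mem_idealOfVars_of_mem_sq hg t)
  exact Ideal.sum_mem _ fun i _ => Ideal.sub_mem _ (hmul _ _) (hmul _ _)

theorem poissonBracket_eq_sum_pderiv (f g : MvPolynomial (Fin n × Fin 2) k) :
    poissonBracket f g = ∑ i : Fin n,
      (pderiv (i, 1) (f * pderiv (i, 0) g) - pderiv (i, 0) (f * pderiv (i, 1) g)) := by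
  refine Finset.sum_congr rfl fun i _ => ?_
  rw [pderiv_mul, pderiv_mul, pderiv_pderiv_comm (i, 0) (i, 1) g]
  ring

theorem coeff_poissonBracket_eq_zero_of_charP (p : ℕ) [CharP k p] {d : Fin n × Fin 2 →₀ ℕ}
    (hd : ∀ s, d s + 1 = p) (f g : MvPolynomial (Fin n × Fin 2) k) :
    coeff d (poissonBracket f g) = 0 := by
  simp only [poissonBracket_eq_sum_pderiv, coeff_sum, coeff_sub,
    coeff_pderiv_eq_zero_of_charP p (hd _), sub_zero, Finset.sum_const_zero]

theorem poissonBracket_X_mul_X_monomial (i : Fin n) (d : Fin n × Fin 2 →₀ ℕ) :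
    poissonBracket (X (i, 0) * X (i, 1)) (monomial d (1 : k)) =
      monomial d ((d (i, 0) : k) - d (i, 1)) := by
  rw [poissonBracket_mul_left, poissonBracket_X_one_left, poissonBracket_X_zero_left, mul_neg,
    X_mul_pderiv_monomial, X_mul_pderiv_monomial, ← sub_eq_add_neg]
  simp [smul_monomial, map_sub]

theorem poissonBracket_X_sq_monomial (i : Fin n) (c : Fin n × Fin 2 →₀ ℕ) :
    poissonBracket (X (i, 0) ^ 2) (monomial (c + Finsupp.single (i, 1) 1) (1 : k)) =
      monomial (c + Finsupp.single (i, 0) 1) (-(2 * ((c (i, 1) : k) + 1))) := by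
  rw [pow_two, poissonBracket_mul_left, poissonBracket_X_zero_left, ← two_mul, mul_neg,
    X_mul_pderiv_monomial_add_single, one_mul, ← map_neg, ← map_ofNat C 2, C_mul_monomial,
    mul_neg]

theorem poissonBracket_X_mul_X_monomial_of_ne {i j : Fin n} (hij : i ≠ j)
    (c : Fin n × Fin 2 →₀ ℕ) :
    poissonBracket (X (j, 0) * X (i, 1))
        (monomial (c + Finsupp.single (i, 0) 1 + Finsupp.single (j, 1) 1) (1 : k)) =
      monomial (c + Finsupp.single (j, 0) 1 + Finsupp.single (j, 1) 1) ((c (i, 0) : k) + 1) -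
        monomial (c + Finsupp.single (i, 0) 1 + Finsupp.single (i, 1) 1) ((c (j, 1) : k) + 1) := by
  rw [poissonBracket_mul_left, poissonBracket_X_one_left, poissonBracket_X_zero_left, mul_neg,
    X_mul_pderiv_monomial_add_single, add_right_comm c, X_mul_pderiv_monomial_add_single,
    ← sub_eq_add_neg]
  simp [hij, add_right_comm c (Finsupp.single (j, 1) 1)]

end PoissonBracket

noncomputable def derivedSpan (k : Type*) [CommRing k] (n : ℕ) :
    Submodule k (MvPolynomial (Fin n × Fin 2) k) :=
  Submodule.span k
    {h | ∃ f ∈ idealOfVars _ k ^ 2, ∃ g ∈ idealOfVars _ k ^ 2, poissonBracket f g = h}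

theorem poissonBracket_mem_derivedSpan {k : Type*} [CommRing k] {n : ℕ}
    {f g : MvPolynomial (Fin n × Fin 2) k} (hf : f ∈ idealOfVars _ k ^ 2)
    (hg : g ∈ idealOfVars _ k ^ 2) : poissonBracket f g ∈ derivedSpan k n :=
  Submodule.subset_span ⟨f, hf, g, hg, rfl⟩

section Field

variable {k : Type*} [Field k] {n : ℕ}

theorem monomial_mem_derivedSpan_of_ne (i : Fin n) {d : Fin n × Fin 2 →₀ ℕ}
    (h : (d (i, 0) : k) ≠ d (i, 1)) (hd : 2 ≤ d.degree) : monomial d 1 ∈ derivedSpan k n := by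
  rw [← monomial_mem_submodule_iff d (sub_ne_zero.2 h), ← poissonBracket_X_mul_X_monomial]
  exact poissonBracket_mem_derivedSpan (X_mul_X_mem_idealOfVars_sq _ _)
    ((monomial_mem_pow_idealOfVars_iff 2 d one_ne_zero).2 hd)

theorem monomial_add_single_mem_derivedSpan (i : Fin n) {c : Fin n × Fin 2 →₀ ℕ}
    (h : 2 * ((c (i, 1) : k) + 1) ≠ 0) (hc : 1 ≤ c.degree) :
    monomial (c + Finsupp.single (i, 0) 1) 1 ∈ derivedSpan k n := by
  rw [← monomial_mem_submodule_iff _ (neg_ne_zero.2 h), ← poissonBracket_X_sq_monomial]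
  refine poissonBracket_mem_derivedSpan
    (Ideal.pow_mem_pow (Ideal.subset_span (Set.mem_range_self (i, 0))) 2)
    ((monomial_mem_pow_idealOfVars_iff 2 _ one_ne_zero).2 ?_)
  simp only [map_add, Finsupp.degree_single]
  omega

theorem monomial_add_single_add_single_mem_derivedSpan {i j : Fin n} (hij : i ≠ j)
    {c : Fin n × Fin 2 →₀ ℕ} (h : (c (j, 1) : k) + 1 ≠ 0)
    (hj : monomial (c + Finsupp.single (j, 0) 1 + Finsupp.single (j, 1) 1) 1 ∈ derivedSpan k n) :
    monomial (c + Finsupp.single (i, 0) 1 + Finsupp.single (i, 1) 1) 1 ∈ derivedSpan k n := by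
  rw [← monomial_mem_submodule_iff _ h]
  have hbr := poissonBracket_mem_derivedSpan (k := k) (X_mul_X_mem_idealOfVars_sq (j, 0) (i, 1))
    ((monomial_mem_pow_idealOfVars_iff 2
      (c + Finsupp.single (i, 0) 1 + Finsupp.single (j, 1) 1) one_ne_zero).2
      (by simp only [map_add, Finsupp.degree_single]; omega))
  rw [poissonBracket_X_mul_X_monomial_of_ne hij] at hbr
  have := Submodule.sub_mem _ (Submodule.smul_mem _ ((c (i, 0) : k) + 1) hj) hbr
  rwa [smul_monomial, smul_eq_mul, mul_one, sub_sub_cancel] at this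

variable {p : ℕ} [CharP k p]

theorem monomial_mem_derivedSpan_of_pos_of_lt (hp : 2 < p) (i : Fin n)
    {d : Fin n × Fin 2 →₀ ℕ} (h0 : 0 < d (i, 0)) (h1 : d (i, 1) + 1 < p) (hd : 2 ≤ d.degree) :
    monomial d 1 ∈ derivedSpan k n := by
  obtain ⟨c, rfl⟩ : ∃ c, d = c + Finsupp.single (i, 0) 1 :=
    le_iff_exists_add'.1 (Finsupp.single_le_iff.2 h0)
  rw [Finsupp.add_apply, Finsupp.single_eq_of_ne (by simp), add_zero] at h1
  rw [map_add, Finsupp.degree_single] at hd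
  refine monomial_add_single_mem_derivedSpan i (mul_ne_zero ?_ ?_) (by omega)
  · exact_mod_cast CharP.natCast_ne_zero_of_pos_of_lt (R := k) p two_pos hp
  · exact_mod_cast CharP.natCast_ne_zero_of_pos_of_lt (R := k) p (c (i, 1)).succ_pos (by omega)

theorem monomial_mem_derivedSpan_of_pos_of_eq_zero (hp : 2 < p) {i j : Fin n} (hij : i ≠ j)
    {d : Fin n × Fin 2 →₀ ℕ} (hi0 : 0 < d (i, 0)) (hi1 : 0 < d (i, 1)) (hj1 : d (j, 1) = 0) :
    monomial d 1 ∈ derivedSpan k n := by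
  obtain ⟨d, rfl⟩ : ∃ c, d = c + Finsupp.single (i, 1) 1 :=
    le_iff_exists_add'.1 (Finsupp.single_le_iff.2 hi1)
  rw [Finsupp.add_apply, Finsupp.single_eq_of_ne (by simp), add_zero] at hi0
  obtain ⟨c, rfl⟩ : ∃ c, d = c + Finsupp.single (i, 0) 1 :=
    le_iff_exists_add'.1 (Finsupp.single_le_iff.2 hi0)
  rw [Finsupp.add_apply, Finsupp.add_apply, Finsupp.single_eq_of_ne (by simp),
    Finsupp.single_eq_of_ne (by simp [hij.symm]), add_zero, add_zero] at hj1
  refine monomial_add_single_add_single_mem_derivedSpan hij (by simp [hj1]) ?_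
  exact monomial_mem_derivedSpan_of_pos_of_lt hp j (by simp) (by simpa [hj1] using hp) (by simp)

theorem monomial_mem_derivedSpan (hp : 2 < p) {d : Fin n × Fin 2 →₀ ℕ} (hlt : ∀ s, d s < p)
    (hd : 2 ≤ d.degree) (hne : ∃ s, d s + 1 ≠ p) : monomial d 1 ∈ derivedSpan k n := by
  by_cases hA : ∃ i, d (i, 0) ≠ d (i, 1)
  · obtain ⟨i, hi⟩ := hA
    exact monomial_mem_derivedSpan_of_ne i
      (fun h => hi (CharP.natCast_injOn_Iio k p (hlt _) (hlt _) h)) hd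
  push Not at hA
  by_cases hB : ∃ i, 0 < d (i, 0) ∧ d (i, 1) + 1 < p
  · obtain ⟨i, h0, h1⟩ := hB
    exact monomial_mem_derivedSpan_of_pos_of_lt hp i h0 h1 hd
  push Not at hB
  obtain ⟨i, hi⟩ : ∃ i, 0 < d (i, 0) := by
    obtain ⟨⟨i, b⟩, hs⟩ : ∃ s, d s ≠ 0 := by
      by_contra! h
      simp [Finsupp.degree_eq_sum, h] at hd
    refine ⟨i, Nat.pos_of_ne_zero ?_⟩
    fin_cases b
    exacts [hs, hA i ▸ hs]
  obtain ⟨j, hj⟩ : ∃ j, d (j, 1) = 0 := by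
    obtain ⟨⟨j, b⟩, hs⟩ := hne
    have hj : d (j, 0) + 1 ≠ p := by
      fin_cases b
      exacts [hs, hA j ▸ hs]
    refine ⟨j, hA j ▸ Nat.eq_zero_of_not_pos fun h0 => ?_⟩
    have := hB j h0
    have := hlt (j, 1)
    have := hA j
    omega
  have hij : i ≠ j := by
    rintro rfl
    have := hA i
    omega
  exact monomial_mem_derivedSpan_of_pos_of_eq_zero hp hij hi (hA i ▸ hi) hj

end Field

theorem monomial_mem_truncationIdeal {k : Type*} [CommRing k] {p n : ℕ}
    {d : Fin n × Fin 2 →₀ ℕ} {s : Fin n × Fin 2} (hs : p ≤ d s) (c : k) :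
    monomial d c ∈ truncationIdeal k p n := by
  obtain ⟨e, rfl⟩ : ∃ e, d = e + Finsupp.single s p :=
    le_iff_exists_add'.1 (Finsupp.single_le_iff.2 hs)
  rw [← mul_one c, ← monomial_mul, ← X_pow_eq_monomial]
  exact Ideal.mul_mem_left _ _ (Ideal.subset_span ⟨s, rfl⟩)

section Truncation

variable (k : Type*) [CommRing k] (p n : ℕ)

def derivedGenerators : Set (MvPolynomial (Fin n × Fin 2) k ⧸ truncationIdeal k p n) :=
  {z : MvPolynomial (Fin n × Fin 2) k ⧸ truncationIdeal k p n |
    ∃ f g : MvPolynomial (Fin n × Fin 2) k,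
      f ∈ (Ideal.span (Set.range (X : Fin n × Fin 2 → MvPolynomial (Fin n × Fin 2) k))) ^ 2 ∧
      g ∈ (Ideal.span (Set.range (X : Fin n × Fin 2 → MvPolynomial (Fin n × Fin 2) k))) ^ 2 ∧
      z = Ideal.Quotient.mk (truncationIdeal k p n) (poissonBracket f g)}

def middleMonomials : Set (MvPolynomial (Fin n × Fin 2) k ⧸ truncationIdeal k p n) :=
  {z : MvPolynomial (Fin n × Fin 2) k ⧸ truncationIdeal k p n |
    ∃ d : (Fin n × Fin 2) →₀ ℕ, (∀ s, d s ≤ p - 1) ∧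
      2 ≤ (d.sum fun _ m => m) ∧ (d.sum fun _ m => m) ≤ 2 * n * (p - 1) - 1 ∧
      z = Ideal.Quotient.mk (truncationIdeal k p n) (monomial d (1 : k))}

variable {k p n}

theorem mk_mem_span_derivedGenerators {h : MvPolynomial (Fin n × Fin 2) k}
    (hh : h ∈ derivedSpan k n) :
    Ideal.Quotient.mk (truncationIdeal k p n) h ∈ Submodule.span k (derivedGenerators k p n) := by
  have hle : derivedSpan k n ≤ (Submodule.span k (derivedGenerators k p n)).comap
      (Ideal.Quotient.mkₐ k (truncationIdeal k p n)).toLinearMap :=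
    Submodule.span_le.2 fun _ ⟨f, hf, g, hg, hfg⟩ =>
      Submodule.subset_span ⟨f, g, hf, hg, by simp [hfg]⟩
  exact hle hh

theorem mk_mem_span_middleMonomials (hp : 0 < p) {h : MvPolynomial (Fin n × Fin 2) k}
    (hlow : h ∈ idealOfVars _ k ^ 2) (htop : ∀ d, (∀ s, d s + 1 = p) → coeff d h = 0) :
    Ideal.Quotient.mk (truncationIdeal k p n) h ∈ Submodule.span k (middleMonomials k p n) := by
  rw [as_sum h, map_sum]
  refine Submodule.sum_mem _ fun d hd => ?_
  rw [← mul_one (coeff d h), ← smul_eq_mul, ← smul_monomial, ← Ideal.Quotient.mkₐ_eq_mk k,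
    map_smul, Ideal.Quotient.mkₐ_eq_mk]
  by_cases hle : ∀ s, d s ≤ p - 1
  · refine Submodule.smul_mem _ _ (Submodule.subset_span ⟨d, hle, ?_, ?_, rfl⟩)
    · exact (mem_pow_idealOfVars_iff 2 h).1 hlow d hd
    · have hne : ∃ s, d s ≠ p - 1 := by
        by_contra! hall
        exact mem_support_iff.1 hd (htop d fun s => by have := hall s; omega)
      have := Finsupp.degree_lt_card_mul hle hne
      rw [Fintype.card_prod, Fintype.card_fin, Fintype.card_fin, mul_comm n 2] at this
      exact Nat.le_sub_one_of_lt this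
  · push Not at hle
    obtain ⟨s, hs⟩ := hle
    rw [Ideal.Quotient.eq_zero_iff_mem.2 (monomial_mem_truncationIdeal (s := s) (by omega) 1),
      smul_zero]
    exact Submodule.zero_mem _

end Truncation

theorem derived_subalgebra_eq_span_monomials_general (k : Type*) [Field k]
    (p : ℕ) [CharP k p] (hp : 2 < p) (n : ℕ) :
    Submodule.span k
        {z : MvPolynomial (Fin n × Fin 2) k ⧸ truncationIdeal k p n |
          ∃ f g : MvPolynomial (Fin n × Fin 2) k,
            f ∈ (Ideal.span (Set.range (X : Fin n × Fin 2 → MvPolynomial (Fin n × Fin 2) k))) ^ 2 ∧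
            g ∈ (Ideal.span (Set.range (X : Fin n × Fin 2 → MvPolynomial (Fin n × Fin 2) k))) ^ 2 ∧
            z = Ideal.Quotient.mk (truncationIdeal k p n) (poissonBracket f g)} =
      Submodule.span k
        {z : MvPolynomial (Fin n × Fin 2) k ⧸ truncationIdeal k p n |
          ∃ d : (Fin n × Fin 2) →₀ ℕ, (∀ s, d s ≤ p - 1) ∧
            2 ≤ (d.sum fun _ m => m) ∧ (d.sum fun _ m => m) ≤ 2 * n * (p - 1) - 1 ∧
            z = Ideal.Quotient.mk (truncationIdeal k p n) (monomial d (1 : k))} := by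
  refine le_antisymm (Submodule.span_le.2 ?_) (Submodule.span_le.2 ?_)
  · rintro _ ⟨f, g, hf, hg, rfl⟩
    exact mk_mem_span_middleMonomials (by omega) (poissonBracket_mem_idealOfVars_sq hf hg)
      fun d hd => coeff_poissonBracket_eq_zero_of_charP p hd f g
  · rintro _ ⟨d, hle, hlow, hhigh, rfl⟩
    change 2 ≤ d.degree at hlow
    change d.degree ≤ _ at hhigh
    have hcard : Fintype.card (Fin n × Fin 2) * (p - 1) = 2 * n * (p - 1) := by simp [mul_comm]
    obtain ⟨s, hs⟩ := Finsupp.exists_ne_of_degree_lt_card_mul (d := d) (m := p - 1) (by omega)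
    exact mk_mem_span_derivedGenerators
      (monomial_mem_derivedSpan hp (fun s => by have := hle s; omega) hlow ⟨s, by omega⟩)

/-- Let `k` be an algebraically closed field of characteristic `p > 2`,
`A₀ = k[x₁,y₁,…,xₙ,yₙ]/(xᵢᵖ, yᵢᵖ)` with the standard Poisson bracket, `m` its maximal ideal
and `g = m²` viewed as a Lie algebra under the Poisson bracket.  Then the derived subalgebra
`[g, g]` (the span of all brackets of elements of `m²`, computed here via representatives in
the square `M²` of the ideal `M` of polynomials without constant term) equals the span of the
(images of the) monomials of degrees `2` through `2n(p−1) − 1`. -/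
theorem derived_subalgebra_eq_span_monomials (k : Type*) [Field k] [IsAlgClosed k]
    (p : ℕ) [CharP k p] (hp : 2 < p) (n : ℕ) :
    Submodule.span k
        {z : MvPolynomial (Fin n × Fin 2) k ⧸ truncationIdeal k p n |
          ∃ f g : MvPolynomial (Fin n × Fin 2) k,
            f ∈ (Ideal.span (Set.range (X : Fin n × Fin 2 → MvPolynomial (Fin n × Fin 2) k))) ^ 2 ∧
            g ∈ (Ideal.span (Set.range (X : Fin n × Fin 2 → MvPolynomial (Fin n × Fin 2) k))) ^ 2 ∧
            z = Ideal.Quotient.mk (truncationIdeal k p n) (poissonBracket f g)} =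
      Submodule.span k
        {z : MvPolynomial (Fin n × Fin 2) k ⧸ truncationIdeal k p n |
          ∃ d : (Fin n × Fin 2) →₀ ℕ, (∀ s, d s ≤ p - 1) ∧
            2 ≤ (d.sum fun _ m => m) ∧ (d.sum fun _ m => m) ≤ 2 * n * (p - 1) - 1 ∧
            z = Ideal.Quotient.mk (truncationIdeal k p n) (monomial d (1 : k))} :=
  derived_subalgebra_eq_span_monomials_general k p hp n
end

section
/- Let k be a field of characteristic p ≥ 3, and let A₁ = k[x,y]/(x^p,y^p) with Poisson bracket {y,x} = 1 and maximal ideal m₁. Then for every integer l ≥ 0 with m₁^l ≠ m₁^{l+1}, the adjoint action of the Lie algebra sl₂ ≅ m₁²/m₁³ (under the Poisson bracket) on the graded piece m₁^l/m₁^{l+1} is an irreducible representation. -/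
/-- Index set of the monomial basis `xᵃyᵇ`, `a + b = l`, of the graded piece
`m₁^l/m₁^{l+1}` of `k[x,y]/(xᵖ,yᵖ)`. -/
def gradedIdx (p l : ℕ) : Type := {q : Fin p × Fin p // (q.1 : ℕ) + (q.2 : ℕ) = l}

/-- The graded piece `m₁^l/m₁^{l+1}`, realised as functions on its monomial basis. -/
abbrev GradedPiece (k : Type*) (p l : ℕ) : Type _ := gradedIdx p l → k

/-- Action of `x² ∈ sl₂ ≅ m₁²/m₁³` via the Poisson bracket
`{x², xᵃyᵇ} = −2b x^{a+1} y^{b−1}` (convention `{f,g} = ∂_y f ∂_x g − ∂_x f ∂_y g`). -/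
noncomputable def opE {k : Type*} [Field k] {p l : ℕ}
    (f : GradedPiece k p l) : GradedPiece k p l := fun q =>
  if h : 0 < (q.1.1 : ℕ) ∧ (q.1.2 : ℕ) + 1 < p then
    (-2 * ((q.1.2 : ℕ) + 1 : ℕ) : k) *
      f ⟨(⟨(q.1.1 : ℕ) - 1, by have := q.1.1.isLt; omega⟩, ⟨(q.1.2 : ℕ) + 1, h.2⟩),
        by have := q.2; simp only at this ⊢; omega⟩
  else 0

/-- Action of `y² ∈ sl₂` via `{y², xᵃyᵇ} = 2a x^{a−1} y^{b+1}`. -/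
noncomputable def opF {k : Type*} [Field k] {p l : ℕ}
    (f : GradedPiece k p l) : GradedPiece k p l := fun q =>
  if h : 0 < (q.1.2 : ℕ) ∧ (q.1.1 : ℕ) + 1 < p then
    (2 * ((q.1.1 : ℕ) + 1 : ℕ) : k) *
      f ⟨(⟨(q.1.1 : ℕ) + 1, h.2⟩, ⟨(q.1.2 : ℕ) - 1, by have := q.1.2.isLt; omega⟩),
        by have := q.2; simp only at this ⊢; omega⟩
  else 0

/-- Action of `xy ∈ sl₂` via `{xy, xᵃyᵇ} = (a − b) xᵃyᵇ`. -/
noncomputable def opH {k : Type*} [Field k] {p l : ℕ}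
    (f : GradedPiece k p l) : GradedPiece k p l := fun q =>
  ((q.1.1 : ℕ) - (q.1.2 : ℕ) : ℤ) * f q

/-!
The element `xy` acts diagonally on the monomial basis `xᵃyᵇ` (`a + b = l`) with eigenvalues
`a - b = 2a - l`, which are pairwise distinct because `p` is odd. Applying a Lagrange
interpolation polynomial in `xy` therefore extracts from any vector of an invariant subspace each
of its monomial components. The elements `x²` and `y²` map `xᵃyᵇ` and `x^{a+1}y^{b-1}` to nonzero
multiples of each other (the coefficients `-2b` and `2(a+1)` are nonzero below `p`), so a single
monomial generates the whole graded piece.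
-/

theorem Submodule.single_mem_of_forall_mul_mem {ι k : Type*} [Fintype ι] [DecidableEq ι]
    [Field k] {c : ι → k} (hc : Function.Injective c) {U : Submodule k (ι → k)}
    (hU : ∀ f ∈ U, c * f ∈ U) {f : ι → k} (hf : f ∈ U) (i : ι) : Pi.single i (f i) ∈ U := by
  have hinterp := Polynomial.aeval_apply_smul_mem_of_le_comap' hf
    (Lagrange.basis Finset.univ c i) c hU
  convert hinterp using 1
  ext j
  rw [Polynomial.aeval_pi_apply]
  rcases eq_or_ne j i with rfl | hji
  · simp [Lagrange.eval_basis_self hc.injOn (Finset.mem_univ j)]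
  · simp [hji, Lagrange.eval_basis_of_ne hji.symm (Finset.mem_univ j)]

namespace gradedIdx

variable {p l : ℕ}

instance : Fintype (gradedIdx p l) := by
  unfold gradedIdx; infer_instance

instance : DecidableEq (gradedIdx p l) := by
  unfold gradedIdx; infer_instance

theorem ext_fst {q r : gradedIdx p l} (h : (q.1.1 : ℕ) = r.1.1) : q = r := by
  have hq := q.2
  have hr := r.2
  exact Subtype.ext (Prod.ext (Fin.ext h) (Fin.ext (by omega)))

theorem induction_of_iff_succ {P : gradedIdx p l → Prop}
    (hP : ∀ q r : gradedIdx p l, (r.1.1 : ℕ) = q.1.1 + 1 → (P q ↔ P r))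
    {q : gradedIdx p l} (hq : P q) (r : gradedIdx p l) : P r := by
  have key : ∀ d : ℕ, ∀ q r : gradedIdx p l, (r.1.1 : ℕ) = q.1.1 + d → (P q ↔ P r) := by
    intro d
    induction d with
    | zero => intro q r h; rw [ext_fst (by omega : (q.1.1 : ℕ) = r.1.1)]
    | succ d ih =>
      intro q r h
      have hq := q.2
      have hr := r.2
      have hqb := q.1.2.isLt
      let m : gradedIdx p l :=
        ⟨(⟨r.1.1 - 1, by omega⟩, ⟨r.1.2 + 1, by omega⟩), by simp only; omega⟩
      exact (ih q m (by simp only [m]; omega)).trans (hP m r (by simp only [m]; omega))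
  rcases le_total (q.1.1 : ℕ) r.1.1 with h | h
  · exact (key _ q r (Nat.add_sub_cancel' h).symm).1 hq
  · exact (key _ r q (Nat.add_sub_cancel' h).symm).2 hq

end gradedIdx

section Sl2Action

variable {k : Type*} [Field k] {p l : ℕ}

theorem natCast_ne_zero_of_lt [CharP k p] {n : ℕ} (h0 : 0 < n) (hn : n < p) : (n : k) ≠ 0 := by
  rw [Ne, CharP.cast_eq_zero_iff k p]
  exact fun hdvd => absurd (Nat.le_of_dvd h0 hdvd) (by omega)

def weight (q : gradedIdx p l) : k := (((q.1.1 : ℕ) - (q.1.2 : ℕ) : ℤ) : k)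

theorem opH_eq_mul (f : GradedPiece k p l) : opH f = weight * f := rfl

theorem weight_injective [CharP k p] (hp : 3 ≤ p) :
    Function.Injective (weight : gradedIdx p l → k) := by
  intro q r h
  have h2 : (2 : k) ≠ 0 := by exact_mod_cast natCast_ne_zero_of_lt (k := k) two_pos (by omega)
  have hw : ∀ s : gradedIdx p l, weight s = 2 * ((s.1.1 : ℕ) : k) - l := by
    intro s
    have hs : (s.1.1 : ℕ) + s.1.2 = l := s.2
    simp only [weight, ← hs]
    push_cast; ring
  rw [hw, hw, sub_left_inj, mul_right_inj' h2] at h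
  exact gradedIdx.ext_fst (CharP.natCast_injOn_Iio k p q.1.1.isLt r.1.1.isLt h)

theorem opE_single_one {q r : gradedIdx p l} (h : (r.1.1 : ℕ) = q.1.1 + 1) :
    opE (Pi.single q (1 : k)) = (-2 * ((q.1.2 : ℕ) : k)) • Pi.single r 1 := by
  have hq := q.2
  have hr := r.2
  funext s
  have hs := s.2
  rw [Pi.smul_apply, smul_eq_mul, Pi.single_apply]
  unfold opE
  -- `erw`: the index built inside `opE` only has type `gradedIdx p l` after unfolding it
  by_cases hsr : s = r
  · subst hsr
    have hb : (s.1.2 : ℕ) + 1 = q.1.2 := by omega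
    erw [dif_pos (by omega), Pi.single_apply, if_pos (gradedIdx.ext_fst (by simp only; omega)),
      if_pos rfl, hb]
  · rw [if_neg hsr, mul_zero]
    split_ifs with hcond
    · erw [Pi.single_apply, if_neg (fun hsq => hsr (gradedIdx.ext_fst ?_)), mul_zero]
      have := congrArg (fun t : gradedIdx p l => (t.1.1 : ℕ)) hsq
      simp only at this
      omega
    · rfl

theorem opF_single_one {q r : gradedIdx p l} (h : (r.1.1 : ℕ) = q.1.1 + 1) :
    opF (Pi.single r (1 : k)) = (2 * ((r.1.1 : ℕ) : k)) • Pi.single q 1 := by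
  have hq := q.2
  have hr := r.2
  funext s
  have hs := s.2
  rw [Pi.smul_apply, smul_eq_mul, Pi.single_apply]
  unfold opF
  by_cases hsq : s = q
  · subst hsq
    erw [dif_pos (by omega), Pi.single_apply, if_pos (gradedIdx.ext_fst (by simp only; omega)),
      if_pos rfl, h]
  · rw [if_neg hsq, mul_zero]
    split_ifs with hcond
    · erw [Pi.single_apply, if_neg (fun hsr => hsq (gradedIdx.ext_fst ?_)), mul_zero]
      have := congrArg (fun t : gradedIdx p l => (t.1.1 : ℕ)) hsr
      simp only at this
      omega
    · rfl

theorem single_one_mem_iff_of_fst_succ [CharP k p] (hp : 3 ≤ p)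
    {U : Submodule k (GradedPiece k p l)}
    (hE : ∀ f ∈ U, opE f ∈ U) (hF : ∀ f ∈ U, opF f ∈ U)
    {q r : gradedIdx p l} (h : (r.1.1 : ℕ) = q.1.1 + 1) :
    Pi.single q (1 : k) ∈ U ↔ Pi.single r (1 : k) ∈ U := by
  have hq := q.2
  have hr := r.2
  have h2 : (2 : k) ≠ 0 := by exact_mod_cast natCast_ne_zero_of_lt (k := k) two_pos (by omega)
  have hqb : ((q.1.2 : ℕ) : k) ≠ 0 := natCast_ne_zero_of_lt (by omega) q.1.2.isLt
  have hra : ((r.1.1 : ℕ) : k) ≠ 0 := natCast_ne_zero_of_lt (by omega) r.1.1.isLt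
  constructor
  · intro hqU
    have := hE _ hqU
    rwa [opE_single_one h, U.smul_mem_iff (by simp [h2, hqb])] at this
  · intro hrU
    have := hF _ hrU
    rwa [opF_single_one h, U.smul_mem_iff (by simp [h2, hra])] at this

end Sl2Action

/-- Let `k` be a field of characteristic `p ≥ 3` and
`A₁ = k[x,y]/(xᵖ,yᵖ)` with Poisson bracket `{y,x} = 1` and maximal ideal `m₁`.  For every
`l ≥ 0` with `m₁^l ≠ m₁^{l+1}` (equivalently, the graded piece has a nonempty monomial basis),
the adjoint action of `sl₂ ≅ m₁²/m₁³` on the graded piece `m₁^l/m₁^{l+1}` is irreducible: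
the space is nonzero and every subspace invariant under the actions of `x²`, `y²`, `xy`
is `⊥` or `⊤`. -/
theorem sl2_action_on_graded_piece_irreducible (k : Type*) [Field k] (p : ℕ) [CharP k p]
    (hp : 3 ≤ p) (l : ℕ) (hl : Nonempty (gradedIdx p l)) :
    (⊥ : Submodule k (GradedPiece k p l)) ≠ ⊤ ∧
    ∀ U : Submodule k (GradedPiece k p l),
      (∀ f ∈ U, opE f ∈ U) → (∀ f ∈ U, opF f ∈ U) → (∀ f ∈ U, opH f ∈ U) →
      U = ⊥ ∨ U = ⊤ := by
  refine ⟨bot_ne_top, fun U hE hF hH => or_iff_not_imp_left.2 fun hU => ?_⟩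
  obtain ⟨f, hfU, hf⟩ := Submodule.exists_mem_ne_zero_of_ne_bot hU
  obtain ⟨q, hq⟩ := Function.ne_iff.1 hf
  have hsingle : Pi.single q (f q) ∈ U :=
    Submodule.single_mem_of_forall_mul_mem (weight_injective hp)
      (by simpa only [opH_eq_mul] using hH) hfU q
  have hqU : Pi.single q (1 : k) ∈ U := by
    rwa [← mul_one (f q), ← smul_eq_mul, Pi.single_smul, U.smul_mem_iff hq] at hsingle
  have hall : ∀ r, Pi.single r (1 : k) ∈ U :=
    gradedIdx.induction_of_iff_succ
      (fun _ _ h => single_one_mem_iff_of_fst_succ hp hE hF h) hqU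
  rw [eq_top_iff, ← (Pi.basisFun k (gradedIdx p l)).span_eq, Submodule.span_le]
  rintro _ ⟨r, rfl⟩
  simpa using hall r
end

section
/- Let R be a finitely generated algebra over a perfect field k such that the nilradical N of R is nilpotent. Then the natural map R_red((h)) → (R((h)))_red is an isomorphism, i.e. the reduction of the Laurent series ring R((h)) equals the Laurent series ring over the reduction R_red = R/N. -/
/-!
Reduction modulo the nilradical `N` acts coefficientwise, so it is surjective on Laurent series and
its kernel consists of the series with all coefficients in `N`. Such a series is nilpotent because
the coefficients of its `m`-th power lie in `N ^ m = 0`; conversely, Laurent series over the reduced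
ring `R / N` form a reduced ring, since the leading coefficient of `x ^ n` is the `n`-th power of
that of `x` as long as the latter is nonzero.
-/

namespace HahnSeries

variable {Γ R : Type*}

theorem map_surjective [PartialOrder Γ] {S F : Type*} [Zero R] [Zero S] [FunLike F R S]
    [ZeroHomClass F R S] {f : F} (hf : Function.Surjective f) :
    Function.Surjective fun x : HahnSeries Γ R => x.map f := by
  classical
  let σ : ZeroHom S R :=
    ⟨fun a => if a = 0 then 0 else Function.surjInv hf a, if_pos rfl⟩
  refine fun y => ⟨y.map σ, ?_⟩
  ext g
  by_cases hg : y.coeff g = 0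
  · simp [σ, hg]
  · simp [σ, hg, Function.surjInv_eq hf]

section Ideal

variable [AddCommMonoid Γ] [PartialOrder Γ] [IsOrderedCancelAddMonoid Γ] [CommSemiring R]
  {I : Ideal R} {x : HahnSeries Γ R}

theorem coeff_pow_mem_pow (hx : ∀ g, x.coeff g ∈ I) (n : ℕ) (g : Γ) :
    (x ^ n).coeff g ∈ I ^ n := by
  induction n generalizing g with
  | zero => simp
  | succ n ih =>
    rw [pow_succ x, pow_succ I, coeff_mul]
    exact Ideal.sum_mem _ fun p _ => Ideal.mul_mem_mul (ih p.1) (hx p.2)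

theorem pow_eq_zero_of_coeff_mem {n : ℕ} (hI : I ^ n = ⊥) (hx : ∀ g, x.coeff g ∈ I) :
    x ^ n = 0 := by
  ext g
  simpa [hI] using coeff_pow_mem_pow hx n g

end Ideal

section Reduced

variable [AddCommMonoid Γ] [LinearOrder Γ] [IsOrderedCancelAddMonoid Γ]

theorem leadingCoeff_pow_of_ne_zero [Semiring R] {x : HahnSeries Γ R} {n : ℕ}
    (h : x.leadingCoeff ^ n ≠ 0) : (x ^ n).leadingCoeff = x.leadingCoeff ^ n := by
  induction n with
  | zero => simp
  | succ n ih =>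
    have hn : x.leadingCoeff ^ n ≠ 0 := fun h0 => h (by rw [pow_succ, h0, zero_mul])
    rw [pow_succ, pow_succ, leadingCoeff_mul_of_ne_zero (by rwa [ih hn, ← pow_succ]), ih hn]

instance [CommSemiring R] [IsReduced R] : IsReduced (HahnSeries Γ R) := by
  refine ⟨fun x ⟨n, hn⟩ => leadingCoeff_eq_zero.mp (IsReduced.eq_zero _ ⟨n, ?_⟩)⟩
  by_contra h
  exact h (by simpa [hn] using (leadingCoeff_pow_of_ne_zero h).symm)

end Reduced

end HahnSeries

theorem laurent_reduction_iso_general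
    (R : Type*) [CommRing R]
    (hnil : ∃ m : ℕ, nilradical R ^ m = ⊥)
    (Φ : LaurentSeries R →+* LaurentSeries (R ⧸ nilradical R))
    (hΦ : ∀ (x : LaurentSeries R) (i : ℤ),
      (Φ x).coeff i = Ideal.Quotient.mk (nilradical R) (x.coeff i)) :
    Function.Surjective Φ ∧ RingHom.ker Φ = nilradical (LaurentSeries R) ∧
    Nonempty ((LaurentSeries R ⧸ nilradical (LaurentSeries R)) ≃+*
      LaurentSeries (R ⧸ nilradical R)) := by
  have hΦ_map : ⇑Φ = fun x => x.map (Ideal.Quotient.mk (nilradical R)) :=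
    funext fun x => HahnSeries.ext (funext (hΦ x))
  have hsurj : Function.Surjective Φ :=
    hΦ_map ▸ HahnSeries.map_surjective Ideal.Quotient.mk_surjective
  have hker : RingHom.ker Φ = nilradical (LaurentSeries R) := by
    ext x
    rw [RingHom.mem_ker, mem_nilradical]
    constructor
    · intro hx
      obtain ⟨m, hm⟩ := hnil
      refine ⟨m, HahnSeries.pow_eq_zero_of_coeff_mem hm fun i => ?_⟩
      simpa [hx, Ideal.Quotient.eq_zero_iff_mem] using (hΦ x i).symm
    · have : IsReduced (R ⧸ nilradical R) :=
        (Ideal.isRadical_iff_quotient_reduced _).mp (Ideal.radical_isRadical _)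
      exact fun hx => IsReduced.eq_zero _ (hx.map Φ)
  exact ⟨hsurj, hker, ⟨(Ideal.quotEquivOfEq hker.symm).trans
    (RingHom.quotientKerEquivOfSurjective hsurj)⟩⟩

/-- Let `R` be a finitely generated algebra over a perfect field `k` such
that the nilradical `N` of `R` is nilpotent.  Then the natural (coefficientwise reduction)
ring homomorphism `R((h)) → R_red((h))` is surjective with kernel the nilradical of `R((h))`;
equivalently, the natural map `R_red((h)) → (R((h)))_red` is an isomorphism. -/
theorem laurent_reduction_iso (k : Type*) [Field k] [PerfectField k]
    (R : Type*) [CommRing R] [Algebra k R] (hfg : Algebra.FiniteType k R)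
    (hnil : ∃ m : ℕ, nilradical R ^ m = ⊥)
    (Φ : LaurentSeries R →+* LaurentSeries (R ⧸ nilradical R))
    (hΦ : ∀ (x : LaurentSeries R) (i : ℤ),
      (Φ x).coeff i = Ideal.Quotient.mk (nilradical R) (x.coeff i)) :
    Function.Surjective Φ ∧ RingHom.ker Φ = nilradical (LaurentSeries R) ∧
    Nonempty ((LaurentSeries R ⧸ nilradical (LaurentSeries R)) ≃+*
      LaurentSeries (R ⧸ nilradical R)) :=
  laurent_reduction_iso_general R hnil Φ hΦ
end

section
/- Let G be a group, let A be an abelian group on which ℤ/2ℤ acts by inversion a ↦ a^{−1}, and suppose G admits a filtration G = G₁ ⊇ G₂ ⊇ … by normal ℤ/2ℤ-stable subgroups with ∩Gₙ = 1, G complete with respect to this filtration, and each quotient Gₙ/G_{n+1} abelian and uniquely 2-divisible. Then H¹(ℤ/2ℤ, G) is trivial, i.e. for any involution τ of G, every element g ∈ G with g·τ(g) = 1 is of the form g = x^{−1}·τ(x) for some x ∈ G. -/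
/-!
Write `x • g = x g τ(x)⁻¹` for twisted conjugation; it preserves cocycles, and `g` is a
coboundary iff `x • g = 1` for some `x`. On a cocycle `h ∈ Gₙ` the involution acts as inversion,
so if `y ∈ Gₙ` is a square root of `h⁻¹` modulo `G_{n+1}`, then `(y h)² ≡ h ≡ τ(y)²`, and unique
`2`-divisibility gives `y • h ∈ G_{n+1}`. Iterating from `x₀ = 1` yields a Cauchy sequence whose
limit `x` has `x • g` in every `Gₙ`, hence `x • g = 1`.
-/

theorem exists_seq_of_forall_exists_succ {α : Type*} {P : ℕ → α → Prop} {R : ℕ → α → α → Prop}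
    {x₀ : α} (h₀ : P 0 x₀) (hstep : ∀ n x, P n x → ∃ y, R n x y ∧ P (n + 1) y) :
    ∃ s : ℕ → α, ∀ n, P n (s n) ∧ R n (s n) (s (n + 1)) := by
  have : Nonempty α := ⟨x₀⟩
  choose! f hf using hstep
  let s : ℕ → α := fun n => Nat.rec x₀ f n
  have hP : ∀ n, P n (s n) := by
    intro n
    induction n with
    | zero => exact h₀
    | succ n ih => exact (hf n _ ih).2
  exact ⟨s, fun n => ⟨hP n, (hf n _ (hP n)).1⟩⟩

section TwistedConj

variable {G : Type*} [Group G] (τ : G →* G)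

def twistedConj (x g : G) : G := x * g * (τ x)⁻¹

theorem twistedConj_mul (x y g : G) :
    twistedConj τ (y * x) g = twistedConj τ y (twistedConj τ x g) := by
  simp only [twistedConj, map_mul, mul_inv_rev, mul_assoc]

theorem twistedConj_eq_one_iff {x g : G} : twistedConj τ x g = 1 ↔ g = x⁻¹ * τ x := by
  rw [twistedConj, mul_inv_eq_one, eq_inv_mul_iff_mul_eq]

variable {τ}

theorem twistedConj_mul_map_eq_one (hinv : ∀ g, τ (τ g) = g) {g : G} (hg : g * τ g = 1)
    (x : G) : twistedConj τ x g * τ (twistedConj τ x g) = 1 := by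
  calc twistedConj τ x g * τ (twistedConj τ x g) = x * (g * τ g) * x⁻¹ := by
        simp only [twistedConj, map_mul, map_inv, hinv]; group
    _ = 1 := by rw [hg, mul_one, mul_inv_cancel]

theorem twistedConj_mem_of_inv_mul_mem {K : Subgroup G} [K.Normal] (hτK : ∀ x ∈ K, τ x ∈ K)
    {a b g : G} (hab : a⁻¹ * b ∈ K) (ha : twistedConj τ a g ∈ K) : twistedConj τ b g ∈ K := by
  have hba : b * a⁻¹ ∈ K := by
    simpa [mul_assoc] using Subgroup.Normal.conj_mem ‹_› _ hab a
  have key : twistedConj τ b g = b * a⁻¹ * twistedConj τ a g * τ (b * a⁻¹)⁻¹ := by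
    simp only [twistedConj, map_mul, map_inv]; group
  rw [key]
  exact K.mul_mem (K.mul_mem hba ha) (hτK _ (K.inv_mem hba))

theorem exists_twistedConj_mem_of_mul_map_eq_one {H K : Subgroup G} [K.Normal]
    (hcomm : ∀ x ∈ H, ∀ y ∈ H, x * y * x⁻¹ * y⁻¹ ∈ K)
    (hdiv : ∀ y ∈ H, ∃ x ∈ H, x ^ 2 * y⁻¹ ∈ K)
    (huniq : ∀ x ∈ H, ∀ x' ∈ H, x ^ 2 * (x' ^ 2)⁻¹ ∈ K → x * x'⁻¹ ∈ K)
    (hτH : ∀ x ∈ H, τ x ∈ H) (hτK : ∀ x ∈ K, τ x ∈ K)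
    {h : G} (hH : h ∈ H) (hh : h * τ h = 1) : ∃ y ∈ H, twistedConj τ y h ∈ K := by
  obtain ⟨y, hyH, hy⟩ := hdiv h⁻¹ (H.inv_mem hH)
  refine ⟨y, hyH, ?_⟩
  have hτh : τ h = h⁻¹ := eq_inv_of_mul_eq_one_right hh
  have hy_sq : ((y ^ 2 : G) : G ⧸ K) = (h⁻¹ : G) :=
    QuotientGroup.eq_iff_div_mem.mpr (by rwa [div_eq_mul_inv])
  have hτy_sq : ((τ y ^ 2 : G) : G ⧸ K) = h := by
    refine QuotientGroup.eq_iff_div_mem.mpr ?_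
    simpa [div_eq_mul_inv, hτh] using hτK _ hy
  have hcomm_yh : Commute (y : G ⧸ K) h := by
    refine (QuotientGroup.eq_iff_div_mem.mpr ?_ : ((y * h : G) : G ⧸ K) = (h * y : G))
    simpa [div_eq_mul_inv, mul_assoc] using hcomm y hyH h hH
  have hyh_sq : (((y * h) ^ 2 : G) : G ⧸ K) = h := by
    rw [QuotientGroup.mk_pow, QuotientGroup.mk_mul, hcomm_yh.mul_pow, ← QuotientGroup.mk_pow,
      hy_sq, sq, QuotientGroup.mk_inv, inv_mul_cancel_left]
  have hsq : τ y ^ 2 * ((y * h) ^ 2)⁻¹ ∈ K := by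
    rw [← div_eq_mul_inv, ← QuotientGroup.eq_iff_div_mem, hτy_sq, hyh_sq]
  simpa [twistedConj, mul_assoc] using K.inv_mem (huniq _ (hτH y hyH) _ (H.mul_mem hyH hH) hsq)

end TwistedConj

/-- Let `G` be a group with a filtration `G = G₁ ⊇ G₂ ⊇ …` by normal
subgroups with trivial intersection, with `G` complete with respect to this filtration, with
abelian and uniquely `2`-divisible quotients `Gₙ/G_{n+1}`, and stable under an involution `τ`.
Then `H¹(ℤ/2ℤ, G)` (for the action by `τ`) is trivial: every `g ∈ G` with `g·τ(g) = 1` is of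
the form `g = x⁻¹·τ(x)`. -/
theorem h1_z2_trivial_of_filtration (G : Type*) [Group G] (N : ℕ → Subgroup G)
    (hnorm : ∀ n, (N n).Normal)
    (htop : N 1 = ⊤)
    (hanti : ∀ n, N (n + 1) ≤ N n)
    (hsep : ∀ g : G, (∀ n, g ∈ N n) → g = 1)
    (hcomplete : ∀ g : ℕ → G, (∀ n, (g n)⁻¹ * g (n + 1) ∈ N n) →
      ∃ x : G, ∀ n, (g n)⁻¹ * x ∈ N n)
    (hab : ∀ n, ∀ x ∈ N n, ∀ y ∈ N n, x * y * x⁻¹ * y⁻¹ ∈ N (n + 1))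
    (hdiv : ∀ n, ∀ y ∈ N n, ∃ x ∈ N n, x ^ 2 * y⁻¹ ∈ N (n + 1))
    (huniq : ∀ n, ∀ x ∈ N n, ∀ x' ∈ N n, x ^ 2 * (x' ^ 2)⁻¹ ∈ N (n + 1) →
      x * x'⁻¹ ∈ N (n + 1))
    (τ : G →* G) (hinv : ∀ g, τ (τ g) = g) (hτN : ∀ n, ∀ x ∈ N n, τ x ∈ N n) :
    ∀ g : G, g * τ g = 1 → ∃ x : G, g = x⁻¹ * τ x := by
  intro g hg
  have hN0 : N 0 = ⊤ := top_le_iff.mp (htop ▸ hanti 0)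
  have step : ∀ n x, twistedConj τ x g ∈ N n →
      ∃ x', x⁻¹ * x' ∈ N n ∧ twistedConj τ x' g ∈ N (n + 1) := by
    intro n x hx
    have := hnorm (n + 1)
    obtain ⟨y, hy, hyx⟩ := exists_twistedConj_mem_of_mul_map_eq_one (hab n) (hdiv n) (huniq n)
      (hτN n) (hτN (n + 1)) hx (twistedConj_mul_map_eq_one hinv hg x)
    refine ⟨y * x, ?_, by rwa [twistedConj_mul]⟩
    simpa [mul_assoc] using (hnorm n).conj_mem y hy x⁻¹
  obtain ⟨s, hs⟩ := exists_seq_of_forall_exists_succ (x₀ := 1) (by simp [hN0]) step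
  obtain ⟨x, hx⟩ := hcomplete s fun n => (hs n).2
  refine ⟨x, (twistedConj_eq_one_iff τ).mp (hsep _ fun n => ?_)⟩
  have := hnorm n
  exact twistedConj_mem_of_inv_mul_mem (hτN n) (hx n) (hs n).1
end
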